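/- arXiv:1504.06408 — 2 statements merged into one kernel-verified Lean document; each statement's English description precedes it below -/
import Mathlib

section
/- Let 0 < ε₀ ≤ 1/2 and let γ ∈ [ε₀, 1−ε₀]. Then there exists a constant C > 0, depending only on ε₀, such that for every x ∈ [−1, 1] and every r₀ ≥ 0, setting z = x + i, one has |√(z − r₀) − γ·√z| ≥ C·√(1 + r₀), where √ denotes the principal branch of the complex square root. -/
/-- The principal branch of the complex square root, `√ζ = exp((1/2)·Log ζ)`. -/
noncomputable def csqrt (ζ : ℂ) : ℂ := ζ ^ (1 / 2 : ℂ)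

lemma csqrt_mul_self {ζ : ℂ} (h : ζ ≠ 0) : csqrt ζ * csqrt ζ = ζ := by
  rw [csqrt, ← Complex.cpow_add _ _ h]
  norm_num

lemma abs_csqrt {ζ : ℂ} (h : ζ ≠ 0) :
    Norm.norm (csqrt ζ) = Real.sqrt (Norm.norm ζ) := by
  have hm : Norm.norm (csqrt ζ) * Norm.norm (csqrt ζ) = Norm.norm ζ := by
    rw [← norm_mul, csqrt_mul_self h]
  rw [← hm, Real.sqrt_mul_self (norm_nonneg _)]

theorem stmt_9 (ε₀ : ℝ) (hε₀ : 0 < ε₀) (hε₀' : ε₀ ≤ 1 / 2) :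
    ∃ C > 0, ∀ γ ∈ Set.Icc ε₀ (1 - ε₀), ∀ x ∈ Set.Icc (-1 : ℝ) 1,
      ∀ r₀ : ℝ, 0 ≤ r₀ →
        C * Real.sqrt (1 + r₀) ≤ Norm.norm
          (csqrt (((x : ℂ) + Complex.I) - (r₀ : ℂ)) -
            (γ : ℂ) * csqrt ((x : ℂ) + Complex.I)) := by
  refine ⟨ε₀ / 12, by positivity, ?_⟩
  rintro γ ⟨hγ1, hγ2⟩ x ⟨hx1, hx2⟩ r₀ hr₀
  set z : ℂ := (x : ℂ) + Complex.I with hz_def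
  have hz : z ≠ 0 := by
    intro h
    have := congrArg Complex.im h
    simp [hz_def] at this
  have hzr : z - (r₀ : ℂ) ≠ 0 := by
    intro h
    have := congrArg Complex.im h
    simp [hz_def] at this
  set a : ℂ := csqrt (z - (r₀ : ℂ)) with ha_def
  set b : ℂ := (γ : ℂ) * csqrt z with hb_def
  set s : ℝ := Real.sqrt (1 + r₀) with hs_def
  have hs1 : (1 : ℝ) ≤ s := by
    have := Real.sqrt_le_sqrt (show (1:ℝ) ≤ 1 + r₀ by linarith)
    simpa [hs_def] using this
  have hss : s * s = 1 + r₀ := Real.mul_self_sqrt (by linarith)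
  have ha2 : a * a = z - (r₀ : ℂ) := csqrt_mul_self hzr
  have hcz : csqrt z * csqrt z = z := csqrt_mul_self hz
  -- difference of squares
  have hdiff : (a - b) * (a + b) = ((1 - γ ^ 2 : ℝ) : ℂ) * z - (r₀ : ℂ) := by
    have : (a - b) * (a + b) = a * a - (γ : ℂ) ^ 2 * (csqrt z * csqrt z) := by
      rw [hb_def]; ring
    rw [this, ha2, hcz]
    push_cast
    ring
  -- real and imaginary parts of the difference of squares
  have him : (((1 - γ ^ 2 : ℝ) : ℂ) * z - (r₀ : ℂ)).im = 1 - γ ^ 2 := by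
    simp [hz_def, ← Complex.ofReal_pow]
  have hre : (((1 - γ ^ 2 : ℝ) : ℂ) * z - (r₀ : ℂ)).re = (1 - γ ^ 2) * x - r₀ := by
    simp [hz_def, ← Complex.ofReal_pow]
  have hγsq : ε₀ ≤ 1 - γ ^ 2 := by nlinarith
  have hγsq' : 1 - γ ^ 2 ≤ 1 := by nlinarith
  have hγsq0 : 0 ≤ 1 - γ ^ 2 := by linarith
  -- lower bound on |w|
  have hw1 : ε₀ ≤ Norm.norm (((1 - γ ^ 2 : ℝ) : ℂ) * z - (r₀ : ℂ)) := by
    calc ε₀ ≤ 1 - γ ^ 2 := hγsq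
    _ = |(((1 - γ ^ 2 : ℝ) : ℂ) * z - (r₀ : ℂ)).im| := by rw [him, abs_of_nonneg hγsq0]
    _ ≤ _ := Complex.abs_im_le_norm _
  have hw2 : r₀ - 1 ≤ Norm.norm (((1 - γ ^ 2 : ℝ) : ℂ) * z - (r₀ : ℂ)) := by
    have h1 : (1 - γ ^ 2) * x ≤ 1 := by nlinarith
    calc r₀ - 1 ≤ -((1 - γ ^ 2) * x - r₀) := by linarith
    _ = -(((1 - γ ^ 2 : ℝ) : ℂ) * z - (r₀ : ℂ)).re := by rw [hre]
    _ ≤ |(((1 - γ ^ 2 : ℝ) : ℂ) * z - (r₀ : ℂ)).re| := neg_le_abs _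
    _ ≤ _ := Complex.abs_re_le_norm _
  have hw : ε₀ / 3 * (1 + r₀) ≤ Norm.norm (((1 - γ ^ 2 : ℝ) : ℂ) * z - (r₀ : ℂ)) := by
    rcases le_or_gt r₀ 2 with h | h
    · calc ε₀ / 3 * (1 + r₀) ≤ ε₀ := by nlinarith
      _ ≤ _ := hw1
    · calc ε₀ / 3 * (1 + r₀) ≤ r₀ - 1 := by nlinarith
      _ ≤ _ := hw2
  -- upper bounds
  have habsz : Norm.norm z ≤ 2 := by
    have : Norm.norm z = Real.sqrt (x ^ 2 + 1) := by
      rw [Complex.norm_def]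
      congr 1
      simp [hz_def, Complex.normSq_apply]
      ring
    rw [this, show (2:ℝ) = Real.sqrt 4 by
      rw [show (4:ℝ) = 2 ^ 2 by norm_num, Real.sqrt_sq (by norm_num)]]
    exact Real.sqrt_le_sqrt (by nlinarith)
  have ha_bound : Norm.norm a ≤ 2 * s := by
    rw [ha_def, abs_csqrt hzr]
    have h1 : Norm.norm (z - (r₀ : ℂ)) ≤ 4 * (1 + r₀) := by
      calc Norm.norm (z - (r₀ : ℂ)) ≤ Norm.norm z + Norm.norm (r₀ : ℂ) :=
            norm_sub_le _ _
      _ = Norm.norm z + r₀ := by rw [Complex.norm_real, Real.norm_eq_abs, abs_of_nonneg hr₀]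
      _ ≤ 4 * (1 + r₀) := by linarith
    calc Real.sqrt (Norm.norm (z - (r₀ : ℂ))) ≤ Real.sqrt (4 * (1 + r₀)) :=
          Real.sqrt_le_sqrt h1
    _ = 2 * s := by
        rw [Real.sqrt_mul (by norm_num), hs_def,
          show (4:ℝ) = 2 ^ 2 by norm_num, Real.sqrt_sq (by norm_num)]
  have hb_bound : Norm.norm b ≤ 2 * s := by
    rw [hb_def, norm_mul, Complex.norm_real, Real.norm_eq_abs, abs_of_nonneg (le_trans hε₀.le hγ1),
      abs_csqrt hz]
    have h1 : Real.sqrt (Norm.norm z) ≤ 2 := by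
      rw [show (2:ℝ) = Real.sqrt 4 by
        rw [show (4:ℝ) = 2 ^ 2 by norm_num, Real.sqrt_sq (by norm_num)]]
      exact Real.sqrt_le_sqrt (by linarith)
    have hγle1 : γ ≤ 1 := by linarith
    have h2 : γ * Real.sqrt (Norm.norm z) ≤ 1 * 2 :=
      mul_le_mul hγle1 h1 (Real.sqrt_nonneg _) (by norm_num)
    linarith
  have hsum : Norm.norm (a + b) ≤ 4 * s := by
    calc Norm.norm (a + b) ≤ Norm.norm a + Norm.norm b := norm_add_le _ _
    _ ≤ 4 * s := by linarith
  -- key inequality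
  have hkey : ε₀ / 3 * (1 + r₀) ≤ Norm.norm (a - b) * Norm.norm (a + b) := by
    rw [← norm_mul, hdiff]; exact hw
  have hfin : ε₀ / 12 * s * (4 * s) ≤ Norm.norm (a - b) * (4 * s) := by
    calc ε₀ / 12 * s * (4 * s) = ε₀ / 3 * (s * s) := by ring
    _ = ε₀ / 3 * (1 + r₀) := by rw [hss]
    _ ≤ Norm.norm (a - b) * Norm.norm (a + b) := hkey
    _ ≤ Norm.norm (a - b) * (4 * s) :=
        mul_le_mul_of_nonneg_left hsum (norm_nonneg _)
  exact le_of_mul_le_mul_right hfin (by positivity)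
end

section
/- Let γ > 1, let a ∈ [0, 1] and let r₀ ≥ 0. Then Im(1/√(−1 − r₀ + i·a)) > γ·Im(1/√(−1 + i·a)), where √ denotes the principal branch of the complex square root. -/
lemma csqrt_sq (ζ : ℂ) (hζ : ζ ≠ 0) : (csqrt ζ) ^ 2 = ζ := by
  rw [csqrt, sq, ← Complex.cpow_add _ _ hζ]; norm_num

lemma csqrt_im_nonneg (ζ : ℂ) (hζ : ζ ≠ 0) (h : 0 ≤ ζ.im) : 0 ≤ (csqrt ζ).im := by
  rw [csqrt, Complex.cpow_def_of_ne_zero hζ, Complex.exp_im]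
  apply mul_nonneg (Real.exp_pos _).le
  apply Real.sin_nonneg_of_nonneg_of_le_pi
  · simp [Complex.mul_im, Complex.log_im]
    have := Complex.arg_nonneg_iff.2 h
    linarith
  · simp [Complex.mul_im, Complex.log_im]
    have := Complex.arg_le_pi ζ
    have := Real.pi_pos
    linarith

/-- For `ζ = -c + i a` with `c > 0`, `a ≥ 0`:
`Im (1/√ζ) = - √((q+c)/2) / q` where `q = √(c²+a²)`. -/
lemma im_one_div_csqrt (c a : ℝ) (hc : 0 < c) (ha : 0 ≤ a) (ζ : ℂ)
    (hre : ζ.re = -c) (him : ζ.im = a) :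
    (1 / csqrt ζ).im =
      - Real.sqrt ((Real.sqrt (c^2 + a^2) + c) / 2) / Real.sqrt (c^2 + a^2) := by
  have hζ : ζ ≠ 0 := by
    intro h; rw [h] at hre; simp at hre; linarith
  set w := csqrt ζ with hw
  have hsq : w ^ 2 = ζ := csqrt_sq ζ hζ
  have hy : 0 ≤ w.im := csqrt_im_nonneg ζ hζ (him ▸ ha)
  set q := Real.sqrt (c^2 + a^2) with hq
  have hq2 : q ^ 2 = c^2 + a^2 := Real.sq_sqrt (by positivity)
  have hqpos : 0 < q := Real.sqrt_pos.2 (by positivity)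
  have hns : Complex.normSq w = q := by
    have h1 : (Complex.normSq w) ^ 2 = Complex.normSq (w ^ 2) := by
      rw [map_pow]
    rw [hsq] at h1
    have h2 : Complex.normSq ζ = c^2 + a^2 := by
      rw [Complex.normSq_apply, hre, him]; ring
    have h3 : (Complex.normSq w) ^ 2 = q ^ 2 := by rw [h1, h2, hq2]
    have := Complex.normSq_nonneg w
    nlinarith
  have hresq : w.re ^ 2 - w.im ^ 2 = -c := by
    have := congrArg Complex.re hsq
    simpa [pow_two, Complex.mul_re, hre] using this
  have hnsq : w.re ^ 2 + w.im ^ 2 = q := by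
    simpa [Complex.normSq_apply, pow_two] using hns
  have him2 : w.im ^ 2 = (q + c) / 2 := by linarith
  have himval : w.im = Real.sqrt ((q + c) / 2) := by
    rw [← him2, Real.sqrt_sq hy]
  rw [one_div, Complex.inv_im, hns, himval]

lemma key_ineq (a c : ℝ) (ha0 : 0 ≤ a) (ha1 : a ≤ 1) (hc : 1 ≤ c) :
    Real.sqrt ((Real.sqrt (c^2 + a^2) + c) / 2) / Real.sqrt (c^2 + a^2)
      ≤ Real.sqrt ((Real.sqrt (1^2 + a^2) + 1) / 2) / Real.sqrt (1^2 + a^2) := by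
  set y := Real.sqrt (1^2 + a^2) with hy
  set q := Real.sqrt (c^2 + a^2) with hqd
  have hy2 : y ^ 2 = 1 + a^2 := by rw [hy, Real.sq_sqrt (by positivity)]; ring
  have hq2 : q ^ 2 = c^2 + a^2 := by rw [hqd, Real.sq_sqrt (by positivity)]
  have hy0 : 0 < y := by rw [hy]; positivity
  have hq0 : 0 < q := by rw [hqd]; positivity
  have hyq : y ≤ q := Real.sqrt_le_sqrt (by nlinarith)
  have hy1 : 1 ≤ y := by rw [hy, Real.one_le_sqrt]; nlinarith
  have hcq : c ≤ q := by
    rw [hqd]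
    nlinarith [Real.sq_sqrt (show (0:ℝ) ≤ c^2+a^2 by positivity),
      Real.sqrt_nonneg (c^2+a^2)]
  have e1 : Real.sqrt ((q + c) / 2) / q = Real.sqrt ((q + c) / (2 * q^2)) := by
    rw [show (q+c)/(2*q^2) = ((q+c)/2)/(q^2) by ring,
      Real.sqrt_div (show (0:ℝ) ≤ (q+c)/2 by positivity) (q^2), Real.sqrt_sq hq0.le]
  have e2 : Real.sqrt ((y + 1) / 2) / y = Real.sqrt ((y + 1) / (2 * y^2)) := by
    rw [show (y+1)/(2*y^2) = ((y+1)/2)/(y^2) by ring,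
      Real.sqrt_div (show (0:ℝ) ≤ (y+1)/2 by positivity) (y^2), Real.sqrt_sq hy0.le]
  rw [e1, e2]
  apply Real.sqrt_le_sqrt
  rw [div_le_div_iff₀ (by positivity) (by positivity)]
  nlinarith [mul_nonneg (mul_nonneg hy0.le hq0.le) (sub_nonneg.2 hyq),
    mul_nonneg (sub_nonneg.2 hc) (sub_nonneg.2 (show a^2 ≤ c by nlinarith))]

theorem stmt_12 (γ : ℝ) (hγ : 1 < γ) (a : ℝ) (ha : a ∈ Set.Icc (0 : ℝ) 1)
    (r₀ : ℝ) (hr₀ : 0 ≤ r₀) :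
    γ * (1 / csqrt (-1 + Complex.I * (a : ℂ))).im <
      (1 / csqrt ((-1 - (r₀ : ℂ)) + Complex.I * (a : ℂ))).im := by
  obtain ⟨ha0, ha1⟩ := ha
  rw [im_one_div_csqrt 1 a one_pos ha0 _ (by simp) (by simp),
    im_one_div_csqrt (1 + r₀) a (by linarith) ha0 _ (by simp; ring) (by simp)]
  have hkey := key_ineq a (1 + r₀) ha0 ha1 (by linarith)
  have hBpos : 0 < Real.sqrt ((Real.sqrt (1^2 + a^2) + 1) / 2) / Real.sqrt (1^2 + a^2) := by
    positivity
  rw [neg_div, neg_div]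
  set A := Real.sqrt ((Real.sqrt ((1+r₀)^2 + a^2) + (1+r₀)) / 2) / Real.sqrt ((1+r₀)^2 + a^2)
  set B := Real.sqrt ((Real.sqrt (1^2 + a^2) + 1) / 2) / Real.sqrt (1^2 + a^2)
  have hAB : A < γ * B := by nlinarith
  linarith
end
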